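/- Discrete energy dissipation of the 1D upwind-SAV scheme: Suppose φⁿ, φⁿ⁺¹ : Fin N → ℝ, μ : Fin N → ℝ, ξ ∈ ℝ satisfy (i) φⁿ⁺¹ᵢ − φⁿᵢ = −(Δt/Δx)(J_{i+1/2} − J_{i−1/2}) with zero boundary fluxes, (ii) J_{i+1/2} = V⁺·M(φⁿ⁺¹ᵢ,φⁿ⁺¹ᵢ₊₁) + V⁻·M(φⁿ⁺¹ᵢ₊₁,φⁿ⁺¹ᵢ) with V_{i+1/2} = −(μᵢ₊₁−μᵢ)/Δx, (iii) μᵢ = −ε²(Δφⁿ⁺¹)ᵢ + ξ·F'(φⁿ⁺¹ᵢ) with the central-difference Laplacian and homogeneous Neumann closure, and (iv) ∑ᵢ(F(φⁿ⁺¹ᵢ) − F(φⁿᵢ)) = ξ·∑ᵢ F'(φⁿ⁺¹ᵢ)(φⁿ⁺¹ᵢ − φⁿᵢ). Then the discrete energy Eⁿ = Δx·∑_{i=1}^{N−1}(ε²/2)((φⁿᵢ₊₁−φⁿᵢ)/Δx)² + Δx·∑_{i=1}^{N} F(φⁿᵢ) satisfies Eⁿ⁺¹ ≤ Eⁿ.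 -/

import Mathlib

noncomputable def upwindMob (k : ℕ) (a b : ℝ) : ℝ :=
  (max (1 + a) 0 * max (1 - b) 0) ^ k

noncomputable def discreteEnergy (N : ℕ) (Δx ε : ℝ) (F : ℝ → ℝ) (ψ : ℕ → ℝ) : ℝ :=
  Δx * ∑ i ∈ Finset.Icc 1 (N - 1), (ε ^ 2 / 2) * ((ψ (i + 1) - ψ i) / Δx) ^ 2
    + Δx * ∑ i ∈ Finset.Icc 1 N, F (ψ i)

/-!
Write `δᵢ = φⁿ⁺¹ᵢ - φⁿᵢ`. Convexity of `x ↦ x² / 2` bounds the change of the gradient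
energy by `(ε² / Δx) ∑ (φⁿ⁺¹ᵢ₊₁ - φⁿ⁺¹ᵢ)(δᵢ₊₁ - δᵢ)`, which summation by parts against the Neumann
Laplacian turns into `-ε² Δx ∑ (Δφⁿ⁺¹)ᵢ δᵢ`; the SAV relation (iv) turns the change of the potential
energy into `Δx ξ ∑ F'(φⁿ⁺¹ᵢ) δᵢ`. Together, `Eⁿ⁺¹ - Eⁿ ≤ Δx ∑ μᵢ δᵢ`. By the update (i) and a second
summation by parts with zero boundary fluxes, `∑ μᵢ δᵢ = -Δt ∑ Vᵢ₊₁/₂ Jᵢ₊₁/₂`, and the upwind flux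
always points along the velocity since the mobility is nonnegative, so `Vᵢ₊₁/₂ Jᵢ₊₁/₂ ≥ 0`.
-/

open Finset

section SummationByParts

variable {R : Type*} [CommRing R]

theorem sum_Icc_mul_sub_pred (f g : ℕ → R) (N : ℕ) :
    ∑ i ∈ Icc 1 N, f i * (g i - g (i - 1)) =
      f (N + 1) * g N - f 1 * g 0 - ∑ i ∈ Icc 1 N, (f (i + 1) - f i) * g i := by
  induction N with
  | zero => simp
  | succ N ih =>
    rw [sum_Icc_succ_top (by omega), sum_Icc_succ_top (by omega), ih, Nat.add_sub_cancel]
    ring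

theorem sum_Icc_mul_sub_pred_of_eq_zero (f g : ℕ → R) {N : ℕ} (h0 : g 0 = 0) (hN : g N = 0) :
    ∑ i ∈ Icc 1 N, f i * (g i - g (i - 1)) = -∑ i ∈ Icc 1 (N - 1), (f (i + 1) - f i) * g i := by
  rw [sum_Icc_mul_sub_pred, h0, hN, mul_zero, mul_zero, sub_zero, zero_sub, neg_inj]
  refine (sum_subset (Icc_subset_Icc_right (Nat.sub_le N 1)) fun i hi hi' => ?_).symm
  obtain rfl : i = N := by simp only [mem_Icc] at hi hi'; omega
  rw [hN, mul_zero]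

end SummationByParts

section NeumannLaplacian

/-- The discrete gradient on the faces, with the homogeneous Neumann condition imposed as zero
values on the boundary faces `0` and `N`. -/
def neumannDiff {R : Type*} [Ring R] (N : ℕ) (φ : ℕ → R) (i : ℕ) : R :=
  if 1 ≤ i ∧ i < N then φ (i + 1) - φ i else 0

variable {N : ℕ} {Δx : ℝ} {φ lap : ℕ → ℝ}

theorem sq_mul_lap_eq_neumannDiff_sub (hN : 2 ≤ N) (hΔx : Δx ≠ 0)
    (hlapI : ∀ i, 2 ≤ i → i ≤ N - 1 → lap i = (φ (i + 1) - 2 * φ i + φ (i - 1)) / Δx ^ 2)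
    (hlap1 : lap 1 = (φ 2 - φ 1) / Δx ^ 2) (hlapN : lap N = (φ (N - 1) - φ N) / Δx ^ 2)
    {i : ℕ} (hi : i ∈ Icc 1 N) :
    Δx ^ 2 * lap i = neumannDiff N φ i - neumannDiff N φ (i - 1) := by
  rw [mem_Icc] at hi
  unfold neumannDiff
  rcases (show i = 1 ∨ i = N ∨ 2 ≤ i ∧ i ≤ N - 1 by omega) with rfl | rfl | hint
  · rw [hlap1, if_pos (by omega), if_neg (by omega)]
    field_simp
    ring
  · rw [hlapN, if_neg (by omega), if_pos (by omega), Nat.sub_add_cancel (by omega)]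
    field_simp
    ring
  · rw [hlapI i hint.1 hint.2, if_pos (by omega), if_pos (by omega), Nat.sub_add_cancel (by omega)]
    field_simp
    ring

theorem sum_diff_mul_diff_eq_neg_sq_mul_sum_lap (hN : 2 ≤ N) (hΔx : Δx ≠ 0)
    (hlapI : ∀ i, 2 ≤ i → i ≤ N - 1 → lap i = (φ (i + 1) - 2 * φ i + φ (i - 1)) / Δx ^ 2)
    (hlap1 : lap 1 = (φ 2 - φ 1) / Δx ^ 2) (hlapN : lap N = (φ (N - 1) - φ N) / Δx ^ 2)
    (δ : ℕ → ℝ) :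
    ∑ i ∈ Icc 1 (N - 1), (φ (i + 1) - φ i) * (δ (i + 1) - δ i) =
      -(Δx ^ 2 * ∑ i ∈ Icc 1 N, lap i * δ i) := by
  calc ∑ i ∈ Icc 1 (N - 1), (φ (i + 1) - φ i) * (δ (i + 1) - δ i)
      = ∑ i ∈ Icc 1 (N - 1), (δ (i + 1) - δ i) * neumannDiff N φ i := by
        refine sum_congr rfl fun i hi => ?_
        rw [mem_Icc] at hi
        rw [neumannDiff, if_pos (by omega), mul_comm]
    _ = -∑ i ∈ Icc 1 N, δ i * (neumannDiff N φ i - neumannDiff N φ (i - 1)) := by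
        rw [sum_Icc_mul_sub_pred_of_eq_zero _ _ (by simp [neumannDiff]) (by simp [neumannDiff]),
          neg_neg]
    _ = -(Δx ^ 2 * ∑ i ∈ Icc 1 N, lap i * δ i) := by
        rw [mul_sum]
        congr 1
        refine sum_congr rfl fun i hi => ?_
        rw [← sq_mul_lap_eq_neumannDiff_sub hN hΔx hlapI hlap1 hlapN hi]
        ring

end NeumannLaplacian

theorem discreteEnergy_sub_le (N : ℕ) {Δx : ℝ} (hΔx : 0 < Δx) (ε : ℝ) (F : ℝ → ℝ)
    (φ ψ : ℕ → ℝ) :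
    discreteEnergy N Δx ε F ψ - discreteEnergy N Δx ε F φ ≤
      ε ^ 2 / Δx * ∑ i ∈ Icc 1 (N - 1),
          (ψ (i + 1) - ψ i) * ((ψ (i + 1) - φ (i + 1)) - (ψ i - φ i))
        + Δx * ∑ i ∈ Icc 1 N, (F (ψ i) - F (φ i)) := by
  have hconvex : ∀ a b : ℝ, Δx * (ε ^ 2 / 2 * (a / Δx) ^ 2) - Δx * (ε ^ 2 / 2 * (b / Δx) ^ 2) ≤
      ε ^ 2 / Δx * (a * (a - b)) := by
    intro a b
    -- `a² / 2 - b² / 2 = a (a - b) - (a - b)² / 2`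
    have hgap : ε ^ 2 / Δx * (a * (a - b)) -
        (Δx * (ε ^ 2 / 2 * (a / Δx) ^ 2) - Δx * (ε ^ 2 / 2 * (b / Δx) ^ 2)) =
        ε ^ 2 / Δx * ((a - b) ^ 2 / 2) := by
      field_simp
      ring
    linarith [show 0 ≤ ε ^ 2 / Δx * ((a - b) ^ 2 / 2) by positivity]
  have hgrad : Δx * ∑ i ∈ Icc 1 (N - 1), ε ^ 2 / 2 * ((ψ (i + 1) - ψ i) / Δx) ^ 2
      - Δx * ∑ i ∈ Icc 1 (N - 1), ε ^ 2 / 2 * ((φ (i + 1) - φ i) / Δx) ^ 2 ≤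
      ε ^ 2 / Δx * ∑ i ∈ Icc 1 (N - 1),
        (ψ (i + 1) - ψ i) * ((ψ (i + 1) - φ (i + 1)) - (ψ i - φ i)) := by
    rw [mul_sum, mul_sum, mul_sum, ← sum_sub_distrib]
    exact sum_le_sum fun i _ => (hconvex _ _).trans_eq (by ring)
  unfold discreteEnergy
  rw [sum_sub_distrib, mul_sub]
  linarith

theorem mul_upwindFlux_nonneg (v : ℝ) {M₁ M₂ : ℝ} (h₁ : 0 ≤ M₁) (h₂ : 0 ≤ M₂) :
    0 ≤ v * (max v 0 * M₁ + min v 0 * M₂) := by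
  rcases le_total 0 v with hv | hv
  · rw [max_eq_left hv, min_eq_right hv, zero_mul, add_zero]
    exact mul_nonneg hv (mul_nonneg hv h₁)
  · rw [max_eq_right hv, min_eq_left hv, zero_mul, zero_add, ← mul_assoc]
    exact mul_nonneg (mul_nonneg_of_nonpos_of_nonpos hv hv) h₂

theorem upwindMob_nonneg (k : ℕ) (a b : ℝ) : 0 ≤ upwindMob k a b := by
  unfold upwindMob
  positivity

theorem sum_mul_update_nonpos {N : ℕ} {Δt Δx : ℝ} (hΔt : 0 ≤ Δt) (hΔx : 0 < Δx)
    {φ φ' μ V J : ℕ → ℝ} (hJ0 : J 0 = 0) (hJN : J N = 0)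
    (hupd : ∀ i, 1 ≤ i → i ≤ N → φ' i - φ i = -(Δt / Δx) * (J i - J (i - 1)))
    (hV : ∀ i, 1 ≤ i → i ≤ N - 1 → V i = -(μ (i + 1) - μ i) / Δx)
    (hVJ : ∀ i ∈ Icc 1 (N - 1), 0 ≤ V i * J i) :
    ∑ i ∈ Icc 1 N, μ i * (φ' i - φ i) ≤ 0 := by
  calc ∑ i ∈ Icc 1 N, μ i * (φ' i - φ i)
      = -(Δt / Δx) * ∑ i ∈ Icc 1 N, μ i * (J i - J (i - 1)) := by
        rw [mul_sum]
        refine sum_congr rfl fun i hi => ?_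
        rw [mem_Icc] at hi
        rw [hupd i hi.1 hi.2]
        ring
    _ = -Δt * ∑ i ∈ Icc 1 (N - 1), V i * J i := by
        rw [sum_Icc_mul_sub_pred_of_eq_zero μ J hJ0 hJN, neg_mul_neg, mul_sum, mul_sum]
        refine sum_congr rfl fun i hi => ?_
        rw [mem_Icc] at hi
        rw [hV i hi.1 hi.2]
        field_simp
    _ ≤ 0 := mul_nonpos_of_nonpos_of_nonneg (neg_nonpos.mpr hΔt) (sum_nonneg hVJ)

theorem upwind_sav_energy_dissipation_general
    (N k : ℕ) (hN : 2 ≤ N)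
    (Δt Δx ε : ℝ) (hΔt : 0 < Δt) (hΔx : 0 < Δx)
    (F F' : ℝ → ℝ)
    (φn φn1 μ V J lap : ℕ → ℝ) (ξ : ℝ)
    (hlapI : ∀ i, 2 ≤ i → i ≤ N - 1 →
      lap i = (φn1 (i + 1) - 2 * φn1 i + φn1 (i - 1)) / Δx ^ 2)
    (hlap1 : lap 1 = (φn1 2 - φn1 1) / Δx ^ 2)
    (hlapN : lap N = (φn1 (N - 1) - φn1 N) / Δx ^ 2)
    (hμ : ∀ i, 1 ≤ i → i ≤ N → μ i = -ε ^ 2 * lap i + ξ * F' (φn1 i))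
    (hV : ∀ i, 1 ≤ i → i ≤ N - 1 → V i = -(μ (i + 1) - μ i) / Δx)
    (hJ0 : J 0 = 0) (hJN : J N = 0)
    (hJ : ∀ i, 1 ≤ i → i ≤ N - 1 →
      J i = max (V i) 0 * upwindMob k (φn1 i) (φn1 (i + 1))
            + min (V i) 0 * upwindMob k (φn1 (i + 1)) (φn1 i))
    (hupd : ∀ i, 1 ≤ i → i ≤ N → φn1 i - φn i = -(Δt / Δx) * (J i - J (i - 1)))
    (hSAV : ∑ i ∈ Finset.Icc 1 N, (F (φn1 i) - F (φn i))
      = ξ * ∑ i ∈ Finset.Icc 1 N, F' (φn1 i) * (φn1 i - φn i)) :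
    discreteEnergy N Δx ε F φn1 ≤ discreteEnergy N Δx ε F φn := by
  set δ : ℕ → ℝ := fun i => φn1 i - φn i
  have hVJ : ∀ i ∈ Icc 1 (N - 1), 0 ≤ V i * J i := fun i hi => by
    rw [mem_Icc] at hi
    rw [hJ i hi.1 hi.2]
    exact mul_upwindFlux_nonneg _ (upwindMob_nonneg ..) (upwindMob_nonneg ..)
  have hdissip := sum_mul_update_nonpos hΔt.le hΔx hJ0 hJN hupd hV hVJ
  have hμδ : ∑ i ∈ Icc 1 N, μ i * δ i =
      -ε ^ 2 * ∑ i ∈ Icc 1 N, lap i * δ i + ξ * ∑ i ∈ Icc 1 N, F' (φn1 i) * δ i := by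
    rw [mul_sum, mul_sum, ← sum_add_distrib]
    refine sum_congr rfl fun i hi => ?_
    rw [mem_Icc] at hi
    rw [hμ i hi.1 hi.2]
    ring
  have hgreen : ε ^ 2 / Δx * ∑ i ∈ Icc 1 (N - 1), (φn1 (i + 1) - φn1 i) * (δ (i + 1) - δ i) =
      Δx * (-ε ^ 2 * ∑ i ∈ Icc 1 N, lap i * δ i) := by
    rw [sum_diff_mul_diff_eq_neg_sq_mul_sum_lap hN hΔx.ne' hlapI hlap1 hlapN]
    field_simp
  have henergy := discreteEnergy_sub_le N hΔx ε F φn φn1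
  rw [hSAV] at henergy
  have hΔxμδ : Δx * ∑ i ∈ Icc 1 N, μ i * δ i ≤ 0 := mul_nonpos_of_nonneg_of_nonpos hΔx.le hdissip
  rw [hμδ, mul_add] at hΔxμδ
  linarith

theorem upwind_sav_energy_dissipation
    (N k : ℕ) (hN : 2 ≤ N) (hk : 1 ≤ k)
    (Δt Δx ε : ℝ) (hΔt : 0 < Δt) (hΔx : 0 < Δx) (hε : 0 < ε)
    (F F' : ℝ → ℝ) (hF : ∀ x, HasDerivAt F (F' x) x)
    (φn φn1 μ V J lap : ℕ → ℝ) (ξ : ℝ)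
    (hlapI : ∀ i, 2 ≤ i → i ≤ N - 1 →
      lap i = (φn1 (i + 1) - 2 * φn1 i + φn1 (i - 1)) / Δx ^ 2)
    (hlap1 : lap 1 = (φn1 2 - φn1 1) / Δx ^ 2)
    (hlapN : lap N = (φn1 (N - 1) - φn1 N) / Δx ^ 2)
    (hμ : ∀ i, 1 ≤ i → i ≤ N → μ i = -ε ^ 2 * lap i + ξ * F' (φn1 i))
    (hV : ∀ i, 1 ≤ i → i ≤ N - 1 → V i = -(μ (i + 1) - μ i) / Δx)
    (hJ0 : J 0 = 0) (hJN : J N = 0)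
    (hJ : ∀ i, 1 ≤ i → i ≤ N - 1 →
      J i = max (V i) 0 * upwindMob k (φn1 i) (φn1 (i + 1))
            + min (V i) 0 * upwindMob k (φn1 (i + 1)) (φn1 i))
    (hupd : ∀ i, 1 ≤ i → i ≤ N → φn1 i - φn i = -(Δt / Δx) * (J i - J (i - 1)))
    (hSAV : ∑ i ∈ Finset.Icc 1 N, (F (φn1 i) - F (φn i))
      = ξ * ∑ i ∈ Finset.Icc 1 N, F' (φn1 i) * (φn1 i - φn i)) :
    discreteEnergy N Δx ε F φn1 ≤ discreteEnergy N Δx ε F φn :=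
  upwind_sav_energy_dissipation_general N k hN Δt Δx ε hΔt hΔx F F' φn φn1 μ V J lap ξ hlapI hlap1
    hlapN hμ hV hJ0 hJN hJ hupd hSAV
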